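/- Fix n ≥ 1 and let w : (0,∞) → ℝ be twice continuously differentiable. Define u(t, r) = t^{−n/2} · exp(−r²/(4t)) · w(r/t) for t, r > 0. Then for all t, r > 0, with φ = r/t: ∂²u/∂r² + ((n−1)/r) ∂u/∂r − ∂u/∂t = t^{−n/2 − 2} · exp(−r²/(4t)) · ( w''(φ) + ((n−1)/φ) w'(φ) ). In particular, u solves the radial heat equation in n dimensions if and only if w satisfies the radial Laplace equation w'' + ((n−1)/φ) w' = 0. -/

import Mathlib

/-- `∂_t` for functions of `(t,r) ∈ ℝ²`. -/
noncomputable def dT (f : ℝ × ℝ → ℝ) (p : ℝ × ℝ) : ℝ := fderiv ℝ f p (1, 0)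

/-- `∂_r` for functions of `(t,r) ∈ ℝ²`. -/
noncomputable def dR (f : ℝ × ℝ → ℝ) (p : ℝ × ℝ) : ℝ := fderiv ℝ f p (0, 1)

/-- The ansatz `u(t,r) = t^{−n/2} e^{−r²/(4t)} w(r/t)`. -/
noncomputable def ansatzU (n : ℕ) (w : ℝ → ℝ) : ℝ × ℝ → ℝ :=
  fun p => p.1 ^ (-(n : ℝ) / 2) * Real.exp (-p.2 ^ 2 / (4 * p.1)) * w (p.2 / p.1)

/-!
Since `dR` and `dT` are defined through the joint Fréchet derivative, the first step is to read
them off one-variable slices; this is legitimate because `u` is `C²` on the open quadrant. On a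
slice the Gaussian factor `e^{-r²/(4t)}` contributes `-(r/(2t))` per `r`-derivative and
`r²/(4t²)` to the `t`-derivative; these, together with `t^{-n/2}`, cancel every term of the heat
operator except `t^{-2} (w'' + ((n-1)/φ) w')`.
-/

open Real Set Filter Topology

lemma dR_eq_deriv {f : ℝ × ℝ → ℝ} {t r : ℝ} (hf : DifferentiableAt ℝ f (t, r)) :
    dR f (t, r) = deriv (fun y => f (t, y)) r :=
  (hf.hasFDerivAt.comp_hasDerivAt r ((hasDerivAt_const _ _).prodMk (hasDerivAt_id _))).deriv.symm

lemma dT_eq_deriv {f : ℝ × ℝ → ℝ} {t r : ℝ} (hf : DifferentiableAt ℝ f (t, r)) :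
    dT f (t, r) = deriv (fun s => f (s, r)) t :=
  (hf.hasFDerivAt.comp_hasDerivAt t ((hasDerivAt_id _).prodMk (hasDerivAt_const _ _))).deriv.symm

-- `dR f` must itself be differentiable at `(t, r)` for its `dR` to be a slice derivative.
lemma dR_dR_eq_deriv_deriv {f : ℝ × ℝ → ℝ} {s : Set (ℝ × ℝ)} {t r : ℝ} (hs : IsOpen s)
    (hp : (t, r) ∈ s) (hf : ContDiffOn ℝ 2 f s) :
    dR (dR f) (t, r) = deriv (deriv fun y => f (t, y)) r := by
  have hdR : ContDiffOn ℝ 1 (dR f) s :=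
    (hf.fderiv_of_isOpen hs le_rfl).clm_apply contDiffOn_const
  rw [dR_eq_deriv ((hdR.differentiableOn one_ne_zero).differentiableAt (hs.mem_nhds hp))]
  have hslice : ∀ᶠ y in 𝓝 r, (t, y) ∈ s :=
    (continuous_const.prodMk continuous_id).continuousAt.preimage_mem_nhds (hs.mem_nhds hp)
  refine Filter.EventuallyEq.deriv_eq ?_
  filter_upwards [hslice] with y hy
  exact dR_eq_deriv ((hf.differentiableOn two_ne_zero).differentiableAt (hs.mem_nhds hy))

lemma contDiffOn_ansatzU {k : WithTop ℕ∞} (n : ℕ) {w : ℝ → ℝ} (hw : ContDiffOn ℝ k w (Ioi 0)) :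
    ContDiffOn ℝ k (ansatzU n w) {p | 0 < p.1 ∧ 0 < p.2} := by
  have hquot : ContDiffOn ℝ k (fun p : ℝ × ℝ => p.2 / p.1) {p | 0 < p.1 ∧ 0 < p.2} :=
    contDiffOn_snd.div contDiffOn_fst fun p hp => hp.1.ne'
  refine ((contDiffOn_fst.rpow_const_of_ne fun p hp => hp.1.ne').mul ?_).mul
    (hw.comp hquot fun p hp => div_pos hp.2 hp.1)
  exact ((contDiffOn_snd.pow 2).neg.div (contDiffOn_const.mul contDiffOn_fst)
    fun p hp => by simp [hp.1.ne']).exp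

lemma hasDerivAt_gaussian_mul {t c r B' : ℝ} {B : ℝ → ℝ} (hB : HasDerivAt B B' r) :
    HasDerivAt (fun y => t ^ c * exp (-y ^ 2 / (4 * t)) * B y)
      (t ^ c * exp (-r ^ 2 / (4 * t)) * (-(r / (2 * t)) * B r + B')) r := by
  have hexponent : HasDerivAt (fun y => -y ^ 2 / (4 * t)) (-(r / (2 * t))) r :=
    ((hasDerivAt_pow 2 r).neg.div_const (4 * t)).congr_deriv (by field_simp; ring)
  exact ((hexponent.exp.const_mul (t ^ c)).mul hB).congr_deriv (by ring)

lemma hasDerivAt_ansatzU_time (n : ℕ) {w : ℝ → ℝ} {t r w' : ℝ} (ht : t ≠ 0)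
    (hw : HasDerivAt w w' (r / t)) :
    HasDerivAt (fun s => ansatzU n w (s, r))
      (t ^ (-(n : ℝ) / 2) * exp (-r ^ 2 / (4 * t)) *
        ((-(n : ℝ) / 2 / t + r ^ 2 / (4 * t ^ 2)) * w (r / t) - (r / t ^ 2) * w')) t := by
  have hpow : HasDerivAt (fun s => s ^ (-(n : ℝ) / 2))
      (t ^ (-(n : ℝ) / 2) * (-(n : ℝ) / 2 / t)) t :=
    (Real.hasDerivAt_rpow_const (Or.inl ht)).congr_deriv (by rw [Real.rpow_sub_one ht]; ring)
  have hexponent : HasDerivAt (fun s => -r ^ 2 / (4 * s)) (r ^ 2 / (4 * t ^ 2)) t :=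
    ((hasDerivAt_const t (-r ^ 2)).div ((hasDerivAt_id t).const_mul 4) (by simp [ht])).congr_deriv
      (by simp only [id]; field_simp; ring)
  have hquot : HasDerivAt (fun s => r / s) (-(r / t ^ 2)) t :=
    ((hasDerivAt_const t r).div (hasDerivAt_id t) ht).congr_deriv (by simp only [id]; ring)
  exact ((hpow.fun_mul hexponent.exp).fun_mul (hw.comp t hquot)).congr_deriv
    (by simp only [Function.comp_apply]; ring)

lemma hasDerivAt_ansatzU_radial (n : ℕ) {w : ℝ → ℝ} {t r w' : ℝ}
    (hw : HasDerivAt w w' (r / t)) :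
    HasDerivAt (fun y => ansatzU n w (t, y))
      (t ^ (-(n : ℝ) / 2) * exp (-r ^ 2 / (4 * t)) * (-(r / (2 * t)) * w (r / t) + w' / t)) r :=
  (hasDerivAt_gaussian_mul (hw.comp r ((hasDerivAt_id r).div_const t))).congr_deriv
    (by simp [div_eq_mul_inv])

noncomputable def radialHeatOp (n : ℕ) (u : ℝ × ℝ → ℝ) (t r : ℝ) : ℝ :=
  dR (dR u) (t, r) + (((n : ℝ) - 1) / r) * dR u (t, r) - dT u (t, r)

noncomputable def radialLaplaceOp (n : ℕ) (w : ℝ → ℝ) (φ : ℝ) : ℝ :=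
  deriv (deriv w) φ + (((n : ℝ) - 1) / φ) * deriv w φ

theorem radialHeatOp_ansatzU (n : ℕ) {w : ℝ → ℝ} (hw : ContDiffOn ℝ 2 w (Ioi 0)) {t r : ℝ}
    (ht : 0 < t) (hr : 0 < r) :
    radialHeatOp n (ansatzU n w) t r =
      t ^ (-(n : ℝ) / 2 - 2) * exp (-r ^ 2 / (4 * t)) * radialLaplaceOp n w (r / t) := by
  have hw' : ∀ x > 0, HasDerivAt w (deriv w x) x := fun x hx =>
    ((hw.differentiableOn two_ne_zero).differentiableAt (Ioi_mem_nhds hx)).hasDerivAt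
  have hw'' : ∀ x > 0, HasDerivAt (deriv w) (deriv (deriv w) x) x := fun x hx =>
    (((hw.deriv_of_isOpen isOpen_Ioi (by norm_num)).differentiableOn one_ne_zero).differentiableAt
      (Ioi_mem_nhds hx)).hasDerivAt
  have hquadrant : IsOpen {p : ℝ × ℝ | 0 < p.1 ∧ 0 < p.2} :=
    (isOpen_lt continuous_const continuous_fst).inter (isOpen_lt continuous_const continuous_snd)
  have hU := contDiffOn_ansatzU n hw
  have hUt : DifferentiableAt ℝ (ansatzU n w) (t, r) :=
    (hU.differentiableOn two_ne_zero).differentiableAt (hquadrant.mem_nhds ⟨ht, hr⟩)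
  have hradial : deriv (fun y => ansatzU n w (t, y)) =ᶠ[𝓝 r] fun y =>
      t ^ (-(n : ℝ) / 2) * exp (-y ^ 2 / (4 * t)) *
        (-(y / (2 * t)) * w (y / t) + deriv w (y / t) / t) := by
    filter_upwards [Ioi_mem_nhds hr] with y hy
    exact (hasDerivAt_ansatzU_radial n (hw' _ (div_pos hy ht))).deriv
  have hB : HasDerivAt (fun y => -(y / (2 * t)) * w (y / t) + deriv w (y / t) / t)
      (-(1 / (2 * t)) * w (r / t) - r / (2 * t) * (deriv w (r / t) / t)
        + deriv (deriv w) (r / t) / t / t) r := by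
    have hscale (a : ℝ) : HasDerivAt (fun y => y / a) (1 / a) r := (hasDerivAt_id r).div_const a
    refine (((hscale (2 * t)).fun_neg.fun_mul ((hw' _ (div_pos hr ht)).comp r (hscale t))).fun_add
      (((hw'' _ (div_pos hr ht)).comp r (hscale t)).div_const t)).congr_deriv ?_
    simp only [Function.comp_apply]
    ring
  have hradial' := hasDerivAt_gaussian_mul (t := t) (c := -(n : ℝ) / 2) hB
  rw [radialHeatOp, dR_dR_eq_deriv_deriv hquadrant ⟨ht, hr⟩ hU, hradial.deriv_eq,
    hradial'.deriv, dR_eq_deriv hUt, dT_eq_deriv hUt,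
    (hasDerivAt_ansatzU_radial n (hw' _ (div_pos hr ht))).deriv,
    (hasDerivAt_ansatzU_time n ht.ne' (hw' _ (div_pos hr ht))).deriv, radialLaplaceOp,
    rpow_sub ht, rpow_two]
  field_simp
  ring

theorem reduction_to_radial_laplace_general (n : ℕ) (w : ℝ → ℝ)
    (hw : ContDiffOn ℝ 2 w (Set.Ioi 0)) :
    (∀ t r : ℝ, 0 < t → 0 < r →
      dR (dR (ansatzU n w)) (t, r) + (((n : ℝ) - 1) / r) * dR (ansatzU n w) (t, r)
          - dT (ansatzU n w) (t, r)
        = t ^ (-(n : ℝ) / 2 - 2) * Real.exp (-r ^ 2 / (4 * t)) *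
            (deriv (deriv w) (r / t) + (((n : ℝ) - 1) / (r / t)) * deriv w (r / t))) ∧
    ((∀ t r : ℝ, 0 < t → 0 < r →
        dR (dR (ansatzU n w)) (t, r) + (((n : ℝ) - 1) / r) * dR (ansatzU n w) (t, r)
          - dT (ansatzU n w) (t, r) = 0) ↔
      (∀ φ : ℝ, 0 < φ →
        deriv (deriv w) φ + (((n : ℝ) - 1) / φ) * deriv w φ = 0)) := by
  have hheat (t r : ℝ) (ht : 0 < t) (hr : 0 < r) := radialHeatOp_ansatzU n hw ht hr
  refine ⟨hheat, fun h φ hφ => ?_, fun h t r ht hr => ?_⟩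
  · simpa [radialHeatOp, radialLaplaceOp, h 1 φ one_pos hφ, exp_ne_zero] using
      (hheat 1 φ one_pos hφ).symm
  · exact (hheat t r ht hr).trans (by rw [radialLaplaceOp, h _ (div_pos hr ht), mul_zero])

/-- Reduction of the radial `n`-dimensional heat equation by
`u = t^{−n/2} e^{−r²/(4t)} w(r/t)`: the heat operator evaluates to
`t^{−n/2−2} e^{−r²/(4t)} (w'' + ((n−1)/φ) w')` at `φ = r/t`, so `u` solves the
radial heat equation iff `w` solves the radial Laplace equation. -/
theorem reduction_to_radial_laplace (n : ℕ) (hn : 1 ≤ n) (w : ℝ → ℝ)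
    (hw : ContDiffOn ℝ 2 w (Set.Ioi 0)) :
    (∀ t r : ℝ, 0 < t → 0 < r →
      dR (dR (ansatzU n w)) (t, r) + (((n : ℝ) - 1) / r) * dR (ansatzU n w) (t, r)
          - dT (ansatzU n w) (t, r)
        = t ^ (-(n : ℝ) / 2 - 2) * Real.exp (-r ^ 2 / (4 * t)) *
            (deriv (deriv w) (r / t) + (((n : ℝ) - 1) / (r / t)) * deriv w (r / t))) ∧
    ((∀ t r : ℝ, 0 < t → 0 < r →
        dR (dR (ansatzU n w)) (t, r) + (((n : ℝ) - 1) / r) * dR (ansatzU n w) (t, r)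
          - dT (ansatzU n w) (t, r) = 0) ↔
      (∀ φ : ℝ, 0 < φ →
        deriv (deriv w) φ + (((n : ℝ) - 1) / φ) * deriv w φ = 0)) :=
  reduction_to_radial_laplace_general n w hw
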